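/- For any n ≥ 3, no product r_{i_0} r_{i_1} r_{i_2} of three prefix-reversals with i_0 ≠ i_1, i_1 ≠ i_2, i_2 ≠ i_0 and each 2 ≤ i_j ≤ n equals the identity permutation; i.e., the Pancake graph P_n contains no triangles. -/

import Mathlib

def pancakeRev (n m : ℕ) : Equiv.Perm (Fin n) :=
  Function.Involutive.toPerm
    (fun a => if h : a.val < m ∧ m ≤ n then ⟨m - 1 - a.val, by omega⟩ else a)
    (by
      intro a
      beta_reduce
      by_cases h : a.val < m ∧ m ≤ n
      · rw [dif_pos h]
        have h2 : m - 1 - a.val < m ∧ m ≤ n := by omega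
        rw [dif_pos h2]
        apply Fin.ext
        simp
        omega
      · rw [dif_neg h, dif_neg h])

/-!
Since prefix-reversals are involutions, a triangle `r_a r_b r_c = 1` gives both
`r_a r_b = r_c` and `r_b r_a = r_c`. Following the top pancake through `r_a r_b = r_c`
forces `a + 1 = b + c`, and likewise `b + 1 = a + c`; hence `a = b`.
-/

@[simp]
theorem pancakeRev_inv (n m : ℕ) : (pancakeRev n m)⁻¹ = pancakeRev n m :=
  Function.Involutive.toPerm_symm _

theorem pancakeRev_val {n m : ℕ} (hm : m ≤ n) (x : Fin n) :
    (pancakeRev n m x : ℕ) = if (x : ℕ) < m then m - 1 - x else x := by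
  change ((if h : (x : ℕ) < m ∧ m ≤ n then _ else x : Fin n) : ℕ) = _
  split_ifs <;> simp_all

theorem add_one_eq_add_of_pancakeRev_mul_eq {n a b c : ℕ} (ha : a ≤ n) (hb : b ≤ n)
    (hc : c ≤ n) (hb₀ : 0 < b) (hc₀ : 0 < c) (hbc : b ≠ c)
    (h : pancakeRev n a * pancakeRev n b = pancakeRev n c) : a + 1 = b + c := by
  have htop := congrArg (fun σ : Equiv.Perm (Fin n) => (σ ⟨0, by omega⟩ : ℕ)) h
  simp only [Equiv.Perm.mul_apply, pancakeRev_val ha, pancakeRev_val hb,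
    pancakeRev_val hc] at htop
  split_ifs at htop <;> omega

theorem pancake_no_triangles_general (n i₀ i₁ i₂ : ℕ)
    (h₀ : 2 ≤ i₀) (h₀n : i₀ ≤ n) (h₁ : 2 ≤ i₁) (h₁n : i₁ ≤ n) (h₂ : 2 ≤ i₂) (h₂n : i₂ ≤ n)
    (h01 : i₀ ≠ i₁) (h12 : i₁ ≠ i₂) (h20 : i₂ ≠ i₀) :
    pancakeRev n i₀ * pancakeRev n i₁ * pancakeRev n i₂ ≠ 1 := by
  intro h
  have h01₂ : pancakeRev n i₀ * pancakeRev n i₁ = pancakeRev n i₂ := by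
    simpa using mul_eq_one_iff_eq_inv.mp h
  have h10₂ : pancakeRev n i₁ * pancakeRev n i₀ = pancakeRev n i₂ := by
    simpa using congrArg (·⁻¹) h01₂
  have e₀ := add_one_eq_add_of_pancakeRev_mul_eq h₀n h₁n h₂n (by omega) (by omega) h12 h01₂
  have e₁ := add_one_eq_add_of_pancakeRev_mul_eq h₁n h₀n h₂n (by omega) (by omega) h20.symm h10₂
  exact h01 (by omega)

theorem pancake_no_triangles (n i₀ i₁ i₂ : ℕ) (hn : 3 ≤ n)
    (h₀ : 2 ≤ i₀) (h₀n : i₀ ≤ n) (h₁ : 2 ≤ i₁) (h₁n : i₁ ≤ n) (h₂ : 2 ≤ i₂) (h₂n : i₂ ≤ n)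
    (h01 : i₀ ≠ i₁) (h12 : i₁ ≠ i₂) (h20 : i₂ ≠ i₀) :
    pancakeRev n i₀ * pancakeRev n i₁ * pancakeRev n i₂ ≠ 1 :=
  pancake_no_triangles_general n i₀ i₁ i₂ h₀ h₀n h₁ h₁n h₂ h₂n h01 h12 h20
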